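/- arXiv:1107.3614 — 3 statements merged into one kernel-verified Lean document; each statement's English description precedes it below -/
import Mathlib

section
/- Let K be a field and P in K[X] a polynomial of degree n ≥ 1. P is irreducible over K if and only if P has no root in any field extension L of K with [L : K] ≤ n/2. -/
/-!
An irreducible `P` with a root `x` in `L` is a scalar multiple of the minimal polynomial of `x`,
so `[L : K] ≥ [K(x) : K] = deg P > deg P / 2`. Conversely, a reducible `P` has a monic factor of
degree in `(0, deg P / 2]`, and adjoining a root of one of its irreducible factors gives an
extension of degree at most `deg P / 2` in which `P` has a root.
-/

open Polynomial

theorem Irreducible.natDegree_le_finrank_of_aeval_eq_zero {K L : Type*} [Field K] [Field L]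
    [Algebra K L] [Module.Finite K L] {P : K[X]} (hP : Irreducible P) {x : L}
    (hx : aeval x P = 0) : P.natDegree ≤ Module.finrank K L :=
  calc P.natDegree = (P * C P.leadingCoeff⁻¹).natDegree :=
        (natDegree_mul_leadingCoeff_inv P hP.ne_zero).symm
    _ = (minpoly K x).natDegree := by rw [minpoly.eq_of_irreducible hP hx]
    _ ≤ Module.finrank K L := minpoly.natDegree_le x

theorem Polynomial.exists_irreducible_dvd_two_mul_natDegree_le {K : Type*} [Field K] {P : K[X]}
    (hP0 : P ≠ 0) (hPu : ¬IsUnit P) (hP : ¬Irreducible P) :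
    ∃ q : K[X], Irreducible q ∧ q ∣ P ∧ 2 * q.natDegree ≤ P.natDegree := by
  rw [irreducible_iff_lt_natDegree_lt hP0 hPu] at hP
  push Not at hP
  obtain ⟨q, hq_monic, hq_deg, hqP⟩ := hP
  rw [Finset.mem_Ioc] at hq_deg
  have hfactor_dvd : factor q ∣ q := factor_dvd_of_natDegree_ne_zero hq_deg.1.ne'
  have hfactor_deg : (factor q).natDegree ≤ q.natDegree :=
    natDegree_le_of_dvd hfactor_dvd hq_monic.ne_zero
  exact ⟨factor q, irreducible_factor q, hfactor_dvd.trans hqP, by omega⟩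

theorem stmt_6 (K : Type) [Field K] (P : K[X]) (n : ℕ) (hn : P.natDegree = n)
    (h1 : 1 ≤ n) :
    Irreducible P ↔
      ∀ (L : Type) (_ : Field L) (_ : Algebra K L), Module.Finite K L →
        2 * Module.finrank K L ≤ n → ∀ x : L, aeval x P ≠ 0 := by
  subst hn
  constructor
  · intro hP L _ _ _ hle x hx
    have := hP.natDegree_le_finrank_of_aeval_eq_zero hx
    have : 0 < Module.finrank K L := Module.finrank_pos
    omega
  · intro h
    by_contra hP
    have hP0 : P ≠ 0 := by rintro rfl; simp at h1
    obtain ⟨q, hq, hqP, hq_deg⟩ := exists_irreducible_dvd_two_mul_natDegree_le hP0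
      (fun hu => by rw [natDegree_eq_zero_of_isUnit hu] at h1; omega) hP
    have := Fact.mk hq
    have : Module.Finite K (AdjoinRoot q) := (AdjoinRoot.powerBasis hq.ne_zero).finite
    refine h (AdjoinRoot q) inferInstance inferInstance inferInstance
      (finrank_quotient_span_eq_natDegree (f := q) ▸ hq_deg) (AdjoinRoot.root q) ?_
    rw [AdjoinRoot.aeval_eq, AdjoinRoot.mk_eq_zero]
    exact hqP
end

section
/- Let n be a nonzero even integer, q = 2^(n/2), and c in F_{2^n} with c^(q+1) = 1. Then (1/c^(2^(n-1)))^q = c / c^(2^(n-1)), and for every ω in F_{2^n}, the element (ω + c·ω^q) / c^(2^(n-1)) lies in the subfield F_{2^(n/2)}. -/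
/-! The map `x ↦ x ^ q` is an involutive field automorphism of `𝔽_{q²}`, and `s = √c` as well as
every `ω + c ω^q` satisfy `y ^ q * c = y`. Two solutions `x, y` of this twisted fixed-point equation
have a `q`-Frobenius-fixed quotient, since `x ^ q * y = x ^ q * y ^ q * c = x * y ^ q`. -/

theorem GaloisField.pow_card_eq_self {p : ℕ} [Fact p.Prime] {n : ℕ} (hn : n ≠ 0)
    (x : GaloisField p n) : x ^ p ^ n = x := by
  have : Fintype (GaloisField p n) := Fintype.ofFinite _
  simpa [← Nat.card_eq_fintype_card, GaloisField.card p n hn] using FiniteField.pow_card x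

theorem CharTwo.pow_mul_eq_self_of_sq_eq_of_pow_succ_eq_one {R : Type*} [CommRing R] [CharP R 2]
    [NoZeroDivisors R] {q : ℕ} {c s : R} (hs : s ^ 2 = c) (hc : c ^ (q + 1) = 1) :
    s ^ q * c = s := by
  apply CharTwo.sq_injective
  calc (s ^ q * c) ^ 2 = c ^ (q + 1) * c := by rw [mul_pow, ← pow_mul, mul_comm q, pow_mul, hs]; ring
    _ = s ^ 2 := by rw [hc, one_mul, hs]

theorem add_mul_pow_pow_mul_eq_self {R : Type*} [CommRing R] {p : ℕ} [ExpChar R p] {k : ℕ}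
    {c ω : R} (hc : c ^ (p ^ k + 1) = 1) (hω : ω ^ (p ^ k * p ^ k) = ω) :
    (ω + c * ω ^ p ^ k) ^ p ^ k * c = ω + c * ω ^ p ^ k := by
  rw [add_pow_expChar_pow, mul_pow, ← pow_mul, hω]
  linear_combination ω * hc

theorem div_pow_eq_self_of_pow_mul_eq_self {K : Type*} [Field K] {q : ℕ} {c x y : K}
    (hx : x ^ q * c = x) (hy : y ^ q * c = y) (hy0 : y ≠ 0) : (x / y) ^ q = x / y := by
  rw [div_pow, div_eq_div_iff (pow_ne_zero _ hy0) hy0]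
  calc x ^ q * y = (x ^ q * c) * y ^ q := by nth_rw 1 [← hy]; ring
    _ = x * y ^ q := by rw [hx]

theorem stmt_11 (n : ℕ) (hn : n ≠ 0) (hev : Even n) [Fact (Nat.Prime 2)]
    (q : ℕ) (hq : q = 2 ^ (n / 2)) (c : GaloisField 2 n) (hc : c ^ (q + 1) = 1) :
    (1 / c ^ 2 ^ (n - 1)) ^ q = c / c ^ 2 ^ (n - 1) ∧
      ∀ ω : GaloisField 2 n,
        ((ω + c * ω ^ q) / c ^ 2 ^ (n - 1)) ^ q
          = (ω + c * ω ^ q) / c ^ 2 ^ (n - 1) := by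
  have hqq : q * q = 2 ^ n := by
    rw [hq, ← pow_add, ← two_mul, Nat.mul_div_cancel' (even_iff_two_dvd.mp hev)]
  set s := c ^ 2 ^ (n - 1)
  have hs : s ^ 2 = c := by
    rw [← pow_mul, ← pow_succ, Nat.sub_add_cancel (Nat.one_le_iff_ne_zero.mpr hn),
      GaloisField.pow_card_eq_self hn]
  have hs0 : s ≠ 0 := by
    rintro h
    simp [← hs, h] at hc
  have hsc : s ^ q * c = s := CharTwo.pow_mul_eq_self_of_sq_eq_of_pow_succ_eq_one hs hc
  refine ⟨?_, fun ω ↦ ?_⟩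
  · rw [div_pow, one_pow, div_eq_div_iff (pow_ne_zero _ hs0) hs0, one_mul, mul_comm, hsc]
  · subst hq
    refine div_pow_eq_self_of_pow_mul_eq_self (add_mul_pow_pow_mul_eq_self hc ?_) hsc hs0
    rw [hqq, GaloisField.pow_card_eq_self hn]
end

section
/- Let n be an even positive integer and i an integer with gcd(i, n/2) = 1. Then gcd(2^i + 1, 2^(n/2) + 1) equals 1 if i is even, equals 1 if i is odd and n/2 is even, and equals 3 if i is odd and n/2 is odd. -/
/-!
Since `2 ^ k + 1 ∣ 4 ^ k - 1`, `gcd (2 ^ a + 1) (2 ^ b + 1)` divides `gcd (4 ^ a - 1) (4 ^ b - 1) = 4 ^ gcd a b - 1 = 3`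
for coprime `a`, `b`; and `3 ∣ 2 ^ k + 1` exactly when `k` is odd, because `2 ≡ -1 [MOD 3]`.
-/

lemma Nat.two_pow_add_one_dvd_four_pow_sub_one (k : ℕ) : 2 ^ k + 1 ∣ 4 ^ k - 1 := by
  have h : 4 ^ k - 1 = (2 ^ k + 1) * (2 ^ k - 1) := by
    rw [← Nat.sq_sub_sq, one_pow, ← pow_mul, mul_comm, pow_mul]; norm_num
  exact h ▸ dvd_mul_right _ _

lemma Nat.three_dvd_two_pow_add_one_iff (k : ℕ) : 3 ∣ 2 ^ k + 1 ↔ Odd k := by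
  rw [← ZMod.natCast_eq_zero_iff, Nat.cast_add, Nat.cast_pow, Nat.cast_one,
    show ((2 : ℕ) : ZMod 3) = -1 from rfl]
  rcases k.even_or_odd with hk | hk
  · simp [hk.neg_one_pow, Nat.not_odd_iff_even.mpr hk]; decide
  · simp [hk.neg_one_pow, hk]

lemma Nat.gcd_two_pow_add_one_dvd_three {a b : ℕ} (h : a.Coprime b) :
    Nat.gcd (2 ^ a + 1) (2 ^ b + 1) ∣ 3 := by
  have := Nat.dvd_gcd
    ((Nat.gcd_dvd_left _ _).trans (Nat.two_pow_add_one_dvd_four_pow_sub_one a))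
    ((Nat.gcd_dvd_right _ _).trans (Nat.two_pow_add_one_dvd_four_pow_sub_one b))
  rwa [Nat.pow_sub_one_gcd_pow_sub_one, h.gcd_eq_one, pow_one] at this

lemma Nat.gcd_two_pow_add_one {a b : ℕ} (h : a.Coprime b) :
    Nat.gcd (2 ^ a + 1) (2 ^ b + 1) = if Odd a ∧ Odd b then 3 else 1 := by
  have hdvd := Nat.gcd_two_pow_add_one_dvd_three h
  split_ifs with hab
  · exact Nat.dvd_antisymm hdvd (Nat.dvd_gcd ((three_dvd_two_pow_add_one_iff a).mpr hab.1)
      ((three_dvd_two_pow_add_one_iff b).mpr hab.2))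
  · rcases (Nat.dvd_prime Nat.prime_three).mp hdvd with h1 | h3
    · exact h1
    · refine absurd ?_ hab
      rw [← three_dvd_two_pow_add_one_iff, ← three_dvd_two_pow_add_one_iff, ← h3]
      exact ⟨Nat.gcd_dvd_left _ _, Nat.gcd_dvd_right _ _⟩

theorem stmt_16_general (n : ℕ) (i : ℕ)
    (h : Nat.gcd i (n / 2) = 1) :
    (Even i → Nat.gcd (2 ^ i + 1) (2 ^ (n / 2) + 1) = 1) ∧
    (Odd i → Even (n / 2) → Nat.gcd (2 ^ i + 1) (2 ^ (n / 2) + 1) = 1) ∧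
    (Odd i → Odd (n / 2) → Nat.gcd (2 ^ i + 1) (2 ^ (n / 2) + 1) = 3) := by
  rw [Nat.gcd_two_pow_add_one h]
  refine ⟨fun hi => if_neg ?_, fun _ hm => if_neg ?_, fun hi hm => if_pos ⟨hi, hm⟩⟩
  · exact fun hodd => Nat.not_odd_iff_even.mpr hi hodd.1
  · exact fun hodd => Nat.not_odd_iff_even.mpr hm hodd.2

theorem stmt_16 (n : ℕ) (hn : 0 < n) (hev : Even n) (i : ℕ)
    (h : Nat.gcd i (n / 2) = 1) :
    (Even i → Nat.gcd (2 ^ i + 1) (2 ^ (n / 2) + 1) = 1) ∧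
    (Odd i → Even (n / 2) → Nat.gcd (2 ^ i + 1) (2 ^ (n / 2) + 1) = 1) ∧
    (Odd i → Odd (n / 2) → Nat.gcd (2 ^ i + 1) (2 ^ (n / 2) + 1) = 3) :=
  stmt_16_general n i h
end
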